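/- For any Markovian policy Π and any t ≤ T-1, taking Π̃ = Π in the function f_t gives the risk-sensitive value of Π itself: Σ_{x,a} θ^Π_{m,t}(x) d_t(x,a) Q^Π_{m,t}(x,a) = E^Π_{α_m}[ exp(Σ_{τ=1}^{T-1} m_τ(X_τ,A_τ,X_{τ+1}) + m_T(X_T)) ]. In particular the left-hand side is the same for every t ≤ T-1. -/

import Mathlib

open Finset Real MeasureTheory

noncomputable section

variable {S A : Type*} [Fintype S] [Fintype A] [DecidableEq S] [DecidableEq A]

namespace RiskCMDP

/-- Probability weight of a full trajectory `(s, a)` of `N` transitions under policy `d`,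
kernel `p` and initial distribution `α`. -/
def trajWeight (N : ℕ) (α : S → ℝ) (d : ℕ → S → A → ℝ) (p : ℕ → S → A → S → ℝ)
    (s : Fin (N+1) → S) (a : Fin N → A) : ℝ :=
  α (s 0) * ∏ k : Fin N, d k (s k.castSucc) (a k) * p k (s k.castSucc) (a k) (s k.succ)

/-- Accumulated cost of a full trajectory, including terminal cost. -/
def totalCost (N : ℕ) (m : ℕ → S → A → S → ℝ) (mT : S → ℝ)
    (s : Fin (N+1) → S) (a : Fin N → A) : ℝ :=
  (∑ k : Fin N, m k (s k.castSucc) (a k) (s k.succ)) + mT (s (Fin.last N))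

/-- Risk-sensitive value `J_m(Π, α) = E[exp(Σ m_t + m_T)]`. -/
def J (N : ℕ) (α : S → ℝ) (d : ℕ → S → A → ℝ) (p : ℕ → S → A → S → ℝ)
    (m : ℕ → S → A → S → ℝ) (mT : S → ℝ) : ℝ :=
  ∑ s : Fin (N+1) → S, ∑ a : Fin N → A,
    trajWeight N α d p s a * Real.exp (totalCost N m mT s a)

/-- Forward factor `θ^Π_{m,t}(x) = E[exp(Σ_{k<t} m_k) 1{X_t = x}]` (0-based time `t`). -/
def theta (α : S → ℝ) (d : ℕ → S → A → ℝ) (p : ℕ → S → A → S → ℝ)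
    (m : ℕ → S → A → S → ℝ) (t : ℕ) (x : S) : ℝ :=
  ∑ s : Fin (t+1) → S, ∑ a : Fin t → A,
    (if s (Fin.last t) = x then
      α (s 0) * ∏ k : Fin t, (d k (s k.castSucc) (a k) * p k (s k.castSucc) (a k) (s k.succ)
        * Real.exp (m k (s k.castSucc) (a k) (s k.succ)))
     else 0)

/-- Backward factor with `r` remaining transitions (absolute time `N - r`). -/
def Qaux (N : ℕ) (d : ℕ → S → A → ℝ) (p : ℕ → S → A → S → ℝ)
    (m : ℕ → S → A → S → ℝ) (mT : S → ℝ) : ℕ → S → A → ℝ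
  | 0, x, _ => Real.exp (mT x)
  | (r+1), x, a =>
      ∑ x' : S, ∑ a' : A,
        Real.exp (m (N - (r+1)) x a x') * p (N - (r+1)) x a x'
          * d (N - r) x' a' * Qaux N d p m mT r x' a'

/-- Backward factor `Q^Π_{m,t}(x,a)` at (0-based) time `t ≤ N`. -/
def Qb (N : ℕ) (d : ℕ → S → A → ℝ) (p : ℕ → S → A → S → ℝ)
    (m : ℕ → S → A → S → ℝ) (mT : S → ℝ) (t : ℕ) (x : S) (a : A) : ℝ :=
  Qaux N d p m mT (N - t) x a

/-- `f_t(Π̃, Θ^Π_m, Q^Π_m) = Σ_{x,a} θ^Π_{m,t}(x) d̃_t(x,a) Q^Π_{m,t}(x,a)`. -/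
def fF (N : ℕ) (α : S → ℝ) (d dtil : ℕ → S → A → ℝ) (p : ℕ → S → A → S → ℝ)
    (m : ℕ → S → A → S → ℝ) (mT : S → ℝ) (t : ℕ) : ℝ :=
  ∑ x : S, ∑ a : A, theta α d p m t x * dtil t x a * Qb N d p m mT t x a

/-- A Markovian randomized policy. -/
def isPolicy (d : ℕ → S → A → ℝ) : Prop :=
  (∀ t x a, 0 ≤ d t x a) ∧ ∀ t x, ∑ a : A, d t x a = 1

/-- A transition kernel. -/
def isKernel (p : ℕ → S → A → S → ℝ) : Prop :=
  (∀ t x a x', 0 ≤ p t x a x') ∧ ∀ t x a, ∑ x' : S, p t x a x' = 1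

/-- A probability distribution on states. -/
def isDist (α : S → ℝ) : Prop := (∀ x, 0 ≤ α x) ∧ ∑ x : S, α x = 1

/-- The one-step modification `η^t_{Π,Π̃}`: follow `d` except at epoch `t`, where `dtil` is used. -/
def update (d dtil : ℕ → S → A → ℝ) (t : ℕ) : ℕ → S → A → ℝ :=
  fun k => if k = t then dtil k else d k

set_option linter.unusedSectionVars false

lemma sum_comm4 {β γ δ ε : Type*} [Fintype β] [Fintype γ] [Fintype δ] [Fintype ε]
    (f : β → γ → δ → ε → ℝ) :
    ∑ x : β, ∑ y : γ, ∑ z : δ, ∑ w : ε, f x y z w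
      = ∑ z : δ, ∑ w : ε, ∑ x : β, ∑ y : γ, f x y z w :=
  calc ∑ x : β, ∑ y : γ, ∑ z : δ, ∑ w : ε, f x y z w
      = ∑ x : β, ∑ z : δ, ∑ y : γ, ∑ w : ε, f x y z w :=
        Finset.sum_congr rfl fun _ _ => Finset.sum_comm
    _ = ∑ z : δ, ∑ x : β, ∑ y : γ, ∑ w : ε, f x y z w := Finset.sum_comm
    _ = ∑ z : δ, ∑ x : β, ∑ w : ε, ∑ y : γ, f x y z w :=
        Finset.sum_congr rfl fun _ _ => Finset.sum_congr rfl fun _ _ => Finset.sum_comm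
    _ = ∑ z : δ, ∑ w : ε, ∑ x : β, ∑ y : γ, f x y z w :=
        Finset.sum_congr rfl fun _ _ => Finset.sum_comm

lemma sum_comm3 {β γ δ : Type*} [Fintype β] [Fintype γ] [Fintype δ]
    (f : β → γ → δ → ℝ) :
    ∑ x : β, ∑ y : γ, ∑ z : δ, f x y z = ∑ y : γ, ∑ z : δ, ∑ x : β, f x y z :=
  calc ∑ x : β, ∑ y : γ, ∑ z : δ, f x y z
      = ∑ y : γ, ∑ x : β, ∑ z : δ, f x y z := Finset.sum_comm
    _ = ∑ y : γ, ∑ z : δ, ∑ x : β, f x y z :=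
        Finset.sum_congr rfl fun _ _ => Finset.sum_comm

lemma theta_succ (α : S → ℝ) (d : ℕ → S → A → ℝ) (p : ℕ → S → A → S → ℝ)
    (m : ℕ → S → A → S → ℝ) (t : ℕ) (x' : S) :
    theta α d p m (t+1) x' =
      ∑ y : S, ∑ b : A, theta α d p m t y *
        (d t y b * p t y b x' * Real.exp (m t y b x')) := by
  have hR : ∑ y : S, ∑ b : A, theta α d p m t y *
        (d t y b * p t y b x' * Real.exp (m t y b x'))
      = ∑ s₀ : Fin (t+1) → S, ∑ a₀ : Fin t → A, ∑ b : A,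
        (α (s₀ 0) * ∏ k : Fin t, (d k (s₀ k.castSucc) (a₀ k) * p k (s₀ k.castSucc) (a₀ k) (s₀ k.succ)
          * Real.exp (m k (s₀ k.castSucc) (a₀ k) (s₀ k.succ))))
        * (d t (s₀ (Fin.last t)) b * p t (s₀ (Fin.last t)) b x'
          * Real.exp (m t (s₀ (Fin.last t)) b x')) := by
    simp only [theta, Finset.sum_mul, ite_mul, zero_mul]
    rw [sum_comm4]
    refine Finset.sum_congr rfl fun s₀ _ => Finset.sum_congr rfl fun a₀ _ => ?_
    rw [Finset.sum_comm]
    refine Finset.sum_congr rfl fun b _ => ?_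
    rw [Finset.sum_ite_eq Finset.univ (s₀ (Fin.last t))]
    simp
  rw [hR]
  rw [theta, ← Equiv.sum_comp (Fin.snocEquiv (fun _ => S)), Fintype.sum_prod_type,
    Finset.sum_comm]
  refine Finset.sum_congr rfl fun s₀ _ => ?_
  have key : ∀ x'' : S, ∑ a : Fin (t+1) → A,
      (if (Fin.snocEquiv (fun _ => S) (x'', s₀)) (Fin.last (t+1)) = x' then
        α ((Fin.snocEquiv (fun _ => S) (x'', s₀)) 0) *
          ∏ k : Fin (t+1), (d k ((Fin.snocEquiv (fun _ => S) (x'', s₀)) k.castSucc) (a k)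
            * p k ((Fin.snocEquiv (fun _ => S) (x'', s₀)) k.castSucc) (a k)
              ((Fin.snocEquiv (fun _ => S) (x'', s₀)) k.succ)
            * Real.exp (m k ((Fin.snocEquiv (fun _ => S) (x'', s₀)) k.castSucc) (a k)
              ((Fin.snocEquiv (fun _ => S) (x'', s₀)) k.succ)))
       else 0)
    = ∑ a₀ : Fin t → A, ∑ b : A,
      if x'' = x' then
        (α (s₀ 0) * ∏ k : Fin t, (d k (s₀ k.castSucc) (a₀ k) * p k (s₀ k.castSucc) (a₀ k) (s₀ k.succ)
          * Real.exp (m k (s₀ k.castSucc) (a₀ k) (s₀ k.succ))))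
        * (d t (s₀ (Fin.last t)) b * p t (s₀ (Fin.last t)) b x''
          * Real.exp (m t (s₀ (Fin.last t)) b x''))
      else 0 := by
    intro x''
    rw [← Equiv.sum_comp (Fin.snocEquiv (fun _ => A)), Fintype.sum_prod_type, Finset.sum_comm]
    refine Finset.sum_congr rfl fun a₀ _ => Finset.sum_congr rfl fun b _ => ?_
    simp only [Fin.snocEquiv_apply]
    rw [Fin.snoc_last]
    congr 1
    have h0 : Fin.snoc (α := fun _ => S) s₀ x'' 0 = s₀ 0 := by
      have h : (0 : Fin (t+2)) = Fin.castSucc 0 := rfl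
      rw [h, Fin.snoc_castSucc]
    rw [h0, Fin.prod_univ_castSucc, ← mul_assoc]
    congr 1
    · congr 1
      refine Finset.prod_congr rfl fun k _ => ?_
      simp [Fin.snoc_castSucc, Fin.succ_castSucc, -Fin.castSucc_succ]
    · simp [Fin.snoc_castSucc, Fin.succ_last, Fin.snoc_last]
  simp only [key]
  rw [Finset.sum_comm]
  refine Finset.sum_congr rfl fun a₀ _ => ?_
  rw [Finset.sum_comm]
  refine Finset.sum_congr rfl fun b _ => ?_
  rw [Finset.sum_ite_eq' Finset.univ x']
  simp

lemma Qb_succ (N : ℕ) (d : ℕ → S → A → ℝ) (p : ℕ → S → A → S → ℝ)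
    (m : ℕ → S → A → S → ℝ) (mT : S → ℝ) {t : ℕ} (ht : t < N) (x : S) (a : A) :
    Qb N d p m mT t x a = ∑ x' : S, ∑ a' : A,
      Real.exp (m t x a x') * p t x a x' * d (t+1) x' a' * Qb N d p m mT (t+1) x' a' := by
  obtain ⟨r, hr⟩ : ∃ r, N - t = r + 1 := ⟨N - t - 1, by omega⟩
  have h1 : N - (r+1) = t := by omega
  have h2 : N - r = t + 1 := by omega
  have h3 : N - (t+1) = r := by omega
  rw [Qb, hr, Qaux, h1, h2]
  simp only [Qb, h3]

lemma fF_succ (N : ℕ) (α : S → ℝ) (d : ℕ → S → A → ℝ) (p : ℕ → S → A → S → ℝ)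
    (m : ℕ → S → A → S → ℝ) (mT : S → ℝ) {t : ℕ} (ht : t < N) :
    fF N α d d p m mT t = fF N α d d p m mT (t+1) := by
  unfold fF
  simp only [theta_succ α d p m t, fun x a => Qb_succ N d p m mT ht x a,
    Finset.mul_sum, Finset.sum_mul]
  rw [sum_comm4]
  refine Finset.sum_congr rfl fun x _ => Finset.sum_congr rfl fun a _ =>
    Finset.sum_congr rfl fun x' _ => Finset.sum_congr rfl fun a' _ => by ring

lemma fF_N (N : ℕ) (α : S → ℝ) (d : ℕ → S → A → ℝ) (p : ℕ → S → A → S → ℝ)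
    (m : ℕ → S → A → S → ℝ) (mT : S → ℝ) (hd1 : ∀ t x, ∑ a : A, d t x a = 1) :
    fF N α d d p m mT N = J N α d p m mT := by
  have hQ : ∀ x a, Qb N d p m mT N x a = Real.exp (mT x) := by
    intro x a; rw [Qb, Nat.sub_self]; rfl
  have h1 : fF N α d d p m mT N = ∑ x : S, theta α d p m N x * Real.exp (mT x) := by
    unfold fF
    refine Finset.sum_congr rfl fun x _ => ?_
    simp only [hQ]
    rw [show ∑ a : A, theta α d p m N x * d N x a * Real.exp (mT x)
        = (∑ a : A, d N x a) * (theta α d p m N x * Real.exp (mT x)) by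
      rw [Finset.sum_mul]; exact Finset.sum_congr rfl fun a _ => by ring]
    rw [hd1, one_mul]
  rw [h1]
  unfold J theta trajWeight totalCost
  simp only [Finset.sum_mul, ite_mul, zero_mul]
  rw [sum_comm3]
  refine Finset.sum_congr rfl fun s _ => Finset.sum_congr rfl fun a _ => ?_
  rw [Finset.sum_ite_eq Finset.univ (s (Fin.last N))]
  simp only [Finset.mem_univ, if_true]
  rw [Real.exp_add, Real.exp_sum, Finset.prod_mul_distrib]
  ring

/-- taking `Π̃ = Π` in `f_t` yields the risk-sensitive value of `Π` itself,
for every `t ≤ T-1`; in particular the left-hand side is the same for every such `t`. -/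
theorem f_self_eq_J (N : ℕ) (α : S → ℝ) (d : ℕ → S → A → ℝ)
    (p : ℕ → S → A → S → ℝ) (m : ℕ → S → A → S → ℝ) (mT : S → ℝ)
    (hd : isPolicy d) (hp : isKernel p) (hα : isDist α) :
    (∀ t, t < N → fF N α d d p m mT t = J N α d p m mT) ∧
    ∀ t t', t < N → t' < N → fF N α d d p m mT t = fF N α d d p m mT t' := by
  have key : ∀ k t, t + k = N → fF N α d d p m mT t = J N α d p m mT := by
    intro k
    induction k with
    | zero =>
      intro t ht
      have h : t = N := by omega
      subst h
      exact fF_N _ α d p m mT hd.2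
    | succ k ih =>
      intro t ht
      rw [fF_succ N α d p m mT (show t < N by omega)]
      exact ih (t+1) (by omega)
  refine ⟨fun t ht => key (N - t) t (by omega), fun t t' ht ht' => ?_⟩
  rw [key (N - t) t (by omega), key (N - t') t' (by omega)]

end RiskCMDP
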